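/- arXiv:2505.03657 — 3 statements merged into one kernel-verified Lean document; each statement's English description precedes it below -/
import Mathlib

section
/- Let (T0, T̃0) be a joint pair of abstract Friedrichs operators on a complex Hilbert space H and let T be a realisation of T0 (T0 ⊆ T ⊆ T1). Then the following statements are equivalent: (i) T is accretive; (ii) L := L1 restricted to dom T is accretive; (iii) dom T ⊆ W⁺, i.e. [u|u] ≥ 0 for every u ∈ dom T. -/
open scoped InnerProductSpace
open Filter Topology LinearPMap

noncomputable section

variable {H : Type*} [NormedAddCommGroup H] [InnerProductSpace ℂ H] [CompleteSpace H]

/-- The inner product used in the paper (antilinear in the **second** entry):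
`pInner x y = ⟪y, x⟫` in Mathlib's convention. -/
def pInner {H : Type*} [NormedAddCommGroup H] [InnerProductSpace ℂ H] (x y : H) : ℂ :=
  ⟪y, x⟫_ℂ

/-- A pair of densely defined operators with common domain satisfying conditions (T1) and (T2). -/
structure IsDualPairT12 (T0 T0t : H →ₗ.[ℂ] H) (lam : ℝ) : Prop where
  dom_eq : T0.domain = T0t.domain
  dense' : Dense (T0.domain : Set H)
  sym : ∀ (φ : T0.domain) (ψ : T0t.domain), pInner (T0 φ) (ψ : H) = pInner (φ : H) (T0t ψ)
  lam_pos : 0 < lam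
  bound : ∀ (x : H) (hx : x ∈ T0.domain),
    ‖T0 ⟨x, hx⟩ + T0t ⟨x, dom_eq.le hx⟩‖ ≤ 2 * lam * ‖x‖

/-- A joint pair of abstract Friedrichs operators: (T1), (T2) and (T3). -/
structure IsFriedrichsPair (T0 T0t : H →ₗ.[ℂ] H) (lam mu : ℝ)
    extends IsDualPairT12 T0 T0t lam : Prop where
  mu_pos : 0 < mu
  coercive : ∀ (x : H) (hx : x ∈ T0.domain),
    2 * mu * ‖x‖ ^ 2 ≤ (pInner (T0 ⟨x, hx⟩ + T0t ⟨x, dom_eq.le hx⟩) x).re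

/-- The boundary form `[u|v] := ⟨T₁u , v⟩ − ⟨u , T̃₁v⟩` on the graph space
`W := dom T₁ = dom (T̃₀)*`.  The hypothesis `hW` expresses the fact `dom T₁ = dom T̃₁`. -/
def bform (T0 T0t : H →ₗ.[ℂ] H) (hW : T0t.adjoint.domain = T0.adjoint.domain)
    (u v : T0t.adjoint.domain) : ℂ :=
  pInner (T0t.adjoint u) (v : H) - pInner (u : H) (T0.adjoint ⟨(v : H), hW.le v.2⟩)

/-- `X^[⊥]`, the `[·|·]`-orthogonal complement of `X ⊆ W` in the graph space. -/
def iorth (T0 T0t : H →ₗ.[ℂ] H) (hW : T0t.adjoint.domain = T0.adjoint.domain)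
    (X : Set ↥T0t.adjoint.domain) : Set ↥T0t.adjoint.domain :=
  {u | ∀ v ∈ X, bform T0 T0t hW u v = 0}

/-- `W⁺ = {u ∈ W : [u|u] ≥ 0}`. -/
def Wplus (T0 T0t : H →ₗ.[ℂ] H) (hW : T0t.adjoint.domain = T0.adjoint.domain) :
    Set ↥T0t.adjoint.domain :=
  {u | 0 ≤ (bform T0 T0t hW u u).re}

/-- `W⁻ = {u ∈ W : [u|u] ≤ 0}`. -/
def Wminus (T0 T0t : H →ₗ.[ℂ] H) (hW : T0t.adjoint.domain = T0.adjoint.domain) :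
    Set ↥T0t.adjoint.domain :=
  {u | (bform T0 T0t hW u u).re ≤ 0}

/-- (V)-boundary conditions for a subset `V` of the graph space `W`. -/
def VBC (T0 T0t : H →ₗ.[ℂ] H) (hW : T0t.adjoint.domain = T0.adjoint.domain)
    (V : Set ↥T0t.adjoint.domain) : Prop :=
  V ⊆ Wplus T0 T0t hW ∧ iorth T0 T0t hW V ⊆ Wminus T0 T0t hW ∧
    V = iorth T0 T0t hW (iorth T0 T0t hW V)

/-- The graph norm `‖u‖_{T₁} = ‖u‖ + ‖T₁ u‖` on the graph space. -/
def gnorm (T0t : H →ₗ.[ℂ] H) (u : T0t.adjoint.domain) : ℝ :=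
  ‖(u : H)‖ + ‖T0t.adjoint u‖

/-- The distance associated with the graph norm. -/
def gdist (T0t : H →ₗ.[ℂ] H) (u v : T0t.adjoint.domain) : ℝ := gnorm T0t (u - v)

/-- Closedness (sequential) in the graph-norm topology of `W`. -/
def GClosed (T0t : H →ₗ.[ℂ] H) (X : Set ↥T0t.adjoint.domain) : Prop :=
  ∀ f : ℕ → ↥T0t.adjoint.domain, (∀ n, f n ∈ X) →
    ∀ l, Tendsto (fun n => gdist T0t (f n) l) atTop (𝓝 0) → l ∈ X

/-- `W₀` (the domain of the closure of `T₀`), viewed as a subset of the graph space `W`. -/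
def W0set (T0 T0t : H →ₗ.[ℂ] H) : Set ↥T0t.adjoint.domain :=
  {u | (u : H) ∈ T0.closure.domain}

/-- The graph inner product on `W` (in the paper's convention). -/
def gip (T0t : H →ₗ.[ℂ] H) (u v : ↥T0t.adjoint.domain) : ℂ :=
  pInner (u : H) (v : H) + pInner (T0t.adjoint u) (T0t.adjoint v)

/-- The (Hilbert) orthogonal complement of `W₀` in the graph space. -/
def W0perp (T0 T0t : H →ₗ.[ℂ] H) : Set ↥T0t.adjoint.domain :=
  {u | ∀ v : ↥T0t.adjoint.domain, (v : H) ∈ T0.closure.domain → gip T0t u v = 0}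

/-- `ker T₁` as a subset of the graph space. -/
def kerT1set (T0t : H →ₗ.[ℂ] H) : Set ↥T0t.adjoint.domain := {u | T0t.adjoint u = 0}

/-- `ker T̃₁` as a subset of the graph space. -/
def kerT1tset (T0 T0t : H →ₗ.[ℂ] H) (hW : T0t.adjoint.domain = T0.adjoint.domain) :
    Set ↥T0t.adjoint.domain :=
  {u | T0.adjoint ⟨(u : H), hW.le u.2⟩ = 0}

/-- An operator `M ∈ L(W;W')`, encoded through the pairing `m u v = ⟨Mu, v⟩_{W',W}`
(linear in `u`, antilinear in `v`, and bounded with respect to the graph norm). -/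
structure MOp (T0t : H →ₗ.[ℂ] H) where
  m : ↥T0t.adjoint.domain → ↥T0t.adjoint.domain → ℂ
  add_left : ∀ u v w, m (u + v) w = m u w + m v w
  smul_left : ∀ (c : ℂ) (u w), m (c • u) w = c * m u w
  add_right : ∀ u v w, m u (v + w) = m u v + m u w
  smul_right : ∀ (c : ℂ) (u w), m u (c • w) = starRingEnd ℂ c * m u w
  bounded : ∃ C, ∀ u v, ‖m u v‖ ≤ C * (gnorm T0t u * gnorm T0t v)

/-- The (M)-boundary conditions for a pairing `m u v = ⟨Mu, v⟩_{W',W}`: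
(M1) non-negativity and (M2) `W = ker (D − M) + ker (D + M)`. -/
def MBC (T0 T0t : H →ₗ.[ℂ] H) (hW : T0t.adjoint.domain = T0.adjoint.domain)
    (m : ↥T0t.adjoint.domain → ↥T0t.adjoint.domain → ℂ) : Prop :=
  (∀ u, 0 ≤ (m u u).re) ∧
  (∀ w : ↥T0t.adjoint.domain, ∃ a b : ↥T0t.adjoint.domain,
    (∀ v, bform T0 T0t hW a v = m a v) ∧ (∀ v, bform T0 T0t hW b v + m b v = 0) ∧ w = a + b)

/-- `ker (D − M)` for a pairing `m`. -/
def kerDsubM (T0 T0t : H →ₗ.[ℂ] H) (hW : T0t.adjoint.domain = T0.adjoint.domain)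
    (m : ↥T0t.adjoint.domain → ↥T0t.adjoint.domain → ℂ) : Set ↥T0t.adjoint.domain :=
  {u | ∀ v, bform T0 T0t hW u v = m u v}

/-- `ker (D + M)` for a pairing `m`. -/
def kerDaddM (T0 T0t : H →ₗ.[ℂ] H) (hW : T0t.adjoint.domain = T0.adjoint.domain)
    (m : ↥T0t.adjoint.domain → ↥T0t.adjoint.domain → ℂ) : Set ↥T0t.adjoint.domain :=
  {u | ∀ v, bform T0 T0t hW u v + m u v = 0}

/-! Write `S := T₁ + T̃₁` on `W` (`symmPart`). Then `2 Re⟨T₁u, u⟩ = Re [u|u] + Re⟨Su, u⟩`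
and `Re⟨L₁u, u⟩ = ½ Re [u|u]`. Since `S` extends `T₀ + T̃₀`, duality with the dense domain `D`
gives `‖Su‖ ≤ 2λ‖u‖`, and then (T3) extends by continuity to `Re⟨Su, u⟩ ≥ 0` on all of `W`;
this yields (iii) ⇒ (i). Conversely `[·|·]` vanishes as soon as one argument lies in `D`, so for
accretive `T` and `φ ∈ D` we get `Re [u|u] = Re [u+φ|u+φ] ≥ -2λ‖u+φ‖²`, and `φ → -u` gives (iii). -/

open ContinuousLinearMap in
theorem norm_le_of_dense_inner_le {E : Type*} [NormedAddCommGroup E] [InnerProductSpace ℂ E]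
    {D : Set E} (hD : Dense D) {x : E} {C : ℝ} (hC : 0 ≤ C)
    (h : ∀ φ ∈ D, ‖⟪x, φ⟫_ℂ‖ ≤ C * ‖φ‖) : ‖x‖ ≤ C := by
  have hall : ∀ y, ‖innerSL ℂ x y‖ ≤ C * ‖y‖ :=
    hD.induction h (isClosed_le (by fun_prop) (by fun_prop))
  exact innerSL_apply_norm ℂ x ▸ opNorm_le_bound _ hC hall

theorem re_inner_map_self_nonneg_of_dense {E : Type*} [NormedAddCommGroup E]
    [InnerProductSpace ℂ E] {W : Submodule ℂ E} (S : W →ₗ[ℂ] E) {C : ℝ}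
    (hS : ∀ w, ‖S w‖ ≤ C * ‖w‖) {D : Set E} (hD : Dense D) (hDW : D ⊆ W)
    (hpos : ∀ w : W, (w : E) ∈ D → 0 ≤ (⟪(w : E), S w⟫_ℂ).re) (w : W) :
    0 ≤ (⟪(w : E), S w⟫_ℂ).re := by
  have hD' : Dense ((↑) ⁻¹' D : Set ↥W) := by
    have hval : ((↑) '' ((↑) ⁻¹' D : Set ↥W) : Set E) = D :=
      Set.image_preimage_eq_of_subset (by simpa using hDW)
    refine Topology.IsInducing.subtypeVal.dense_iff.2 fun x => ?_
    have hx : (x : E) ∈ closure D := hD.closure_eq ▸ Set.mem_univ _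
    rwa [← hval] at hx
  let Sc : W →L[ℂ] E := S.mkContinuous C hS
  exact hD'.induction hpos (isClosed_le continuous_const
    (show Continuous fun w : W => (⟪(w : E), Sc w⟫_ℂ).re by fun_prop)) w

namespace IsDualPairT12

variable {T0 T0t : H →ₗ.[ℂ] H} {lam : ℝ}

omit [CompleteSpace H] in
theorem isFormalAdjoint (hF : IsDualPairT12 T0 T0t lam) : T0.IsFormalAdjoint T0t := fun φ ψ => by
  rw [← inner_conj_symm, ← pInner, hF.sym, pInner, inner_conj_symm]

omit [CompleteSpace H] in
theorem dense_domain_right (hF : IsDualPairT12 T0 T0t lam) : Dense (T0t.domain : Set H) :=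
  hF.dom_eq ▸ hF.dense'

theorem le_adjoint_right (hF : IsDualPairT12 T0 T0t lam) : T0 ≤ T0t.adjoint :=
  hF.isFormalAdjoint.symm.le_adjoint hF.dense_domain_right

theorem le_adjoint_left (hF : IsDualPairT12 T0 T0t lam) : T0t ≤ T0.adjoint :=
  hF.isFormalAdjoint.le_adjoint hF.dense'

end IsDualPairT12

def tildeT1 (T0 T0t : H →ₗ.[ℂ] H) (hW : T0t.adjoint.domain = T0.adjoint.domain) :
    T0t.adjoint.domain →ₗ[ℂ] H :=
  T0.adjoint.toFun ∘ₗ Submodule.inclusion hW.le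

def symmPart (T0 T0t : H →ₗ.[ℂ] H) (hW : T0t.adjoint.domain = T0.adjoint.domain) :
    T0t.adjoint.domain →ₗ[ℂ] H :=
  T0t.adjoint.toFun + tildeT1 T0 T0t hW

section GraphSpace

variable {T0 T0t : H →ₗ.[ℂ] H} {hW : T0t.adjoint.domain = T0.adjoint.domain}

theorem tildeT1_apply (u : T0t.adjoint.domain) :
    tildeT1 T0 T0t hW u = T0.adjoint ⟨(u : H), hW.le u.2⟩ :=
  rfl

theorem bform_eq (u v : T0t.adjoint.domain) :
    bform T0 T0t hW u v = ⟪(v : H), T0t.adjoint u⟫_ℂ - ⟪tildeT1 T0 T0t hW v, (u : H)⟫_ℂ :=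
  rfl

theorem re_bform_self (u : T0t.adjoint.domain) :
    (bform T0 T0t hW u u).re =
      (⟪(u : H), T0t.adjoint u⟫_ℂ).re - (⟪(u : H), tildeT1 T0 T0t hW u⟫_ℂ).re := by
  rw [bform_eq, Complex.sub_re, ← inner_conj_symm (tildeT1 T0 T0t hW u), Complex.conj_re]

theorem two_mul_re_inner_adjoint_self (u : T0t.adjoint.domain) :
    2 * (⟪(u : H), T0t.adjoint u⟫_ℂ).re =
      (bform T0 T0t hW u u).re + (⟪(u : H), symmPart T0 T0t hW u⟫_ℂ).re := by
  rw [re_bform_self, symmPart, LinearMap.add_apply, inner_add_right, Complex.add_re]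
  simp only [LinearPMap.toFun_eq_coe]
  ring

theorem re_pInner_half_sub_self (u : T0t.adjoint.domain) :
    (pInner ((2 : ℂ)⁻¹ • (T0t.adjoint u - T0.adjoint ⟨(u : H), hW.le u.2⟩)) (u : H)).re =
      2⁻¹ * (bform T0 T0t hW u u).re := by
  rw [re_bform_self, pInner, inner_smul_right, inner_sub_right, tildeT1_apply]
  simp

variable {lam : ℝ} (hF : IsDualPairT12 T0 T0t lam)
include hF

theorem adjoint_apply_of_mem (φ : T0t.adjoint.domain) (hφ : (φ : H) ∈ T0.domain) :
    T0t.adjoint φ = T0 ⟨φ, hφ⟩ :=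
  (hF.le_adjoint_right.2 rfl).symm

theorem tildeT1_apply_of_mem (φ : T0t.adjoint.domain) (hφ : (φ : H) ∈ T0.domain) :
    tildeT1 T0 T0t hW φ = T0t ⟨φ, hF.dom_eq ▸ hφ⟩ :=
  (hF.le_adjoint_left.2 rfl).symm

theorem bform_eq_zero_of_mem_right (u φ : T0t.adjoint.domain) (hφ : (φ : H) ∈ T0.domain) :
    bform T0 T0t hW u φ = 0 := by
  rw [bform_eq, tildeT1_apply_of_mem hF φ hφ, ← inner_conj_symm,
    LinearPMap.adjoint_isFormalAdjoint hF.dense_domain_right u ⟨φ, hF.dom_eq ▸ hφ⟩,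
    inner_conj_symm, sub_self]

theorem bform_eq_zero_of_mem_left (φ u : T0t.adjoint.domain) (hφ : (φ : H) ∈ T0.domain) :
    bform T0 T0t hW φ u = 0 := by
  rw [bform_eq, adjoint_apply_of_mem hF φ hφ, tildeT1_apply,
    LinearPMap.adjoint_isFormalAdjoint hF.dense' ⟨u, hW.le u.2⟩ ⟨φ, hφ⟩, sub_self]

theorem bform_add_self_of_mem (u φ : T0t.adjoint.domain) (hφ : (φ : H) ∈ T0.domain) :
    bform T0 T0t hW (u + φ) (u + φ) = bform T0 T0t hW u u := by
  have huφ := bform_eq_zero_of_mem_right (hW := hW) hF u φ hφ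
  have hφu := bform_eq_zero_of_mem_left (hW := hW) hF φ u hφ
  have hφφ := bform_eq_zero_of_mem_right (hW := hW) hF φ φ hφ
  simp only [bform_eq, LinearPMap.map_add, _root_.map_add, Submodule.coe_add, inner_add_left,
    inner_add_right] at huφ hφu hφφ ⊢
  linear_combination huφ + hφu + hφφ

theorem inner_symmPart_of_mem (u : T0t.adjoint.domain) (φ : T0.domain) :
    ⟪symmPart T0 T0t hW u, (φ : H)⟫_ℂ = ⟪(u : H), T0 φ + T0t ⟨φ, hF.dom_eq ▸ φ.2⟩⟫_ℂ := by
  rw [symmPart, LinearMap.add_apply, inner_add_left, inner_add_right, LinearPMap.toFun_eq_coe,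
    LinearPMap.adjoint_isFormalAdjoint hF.dense_domain_right u ⟨φ, hF.dom_eq ▸ φ.2⟩,
    tildeT1, LinearMap.comp_apply, LinearPMap.toFun_eq_coe,
    LinearPMap.adjoint_isFormalAdjoint hF.dense' _ φ, add_comm]
  rfl

theorem norm_symmPart_le (u : T0t.adjoint.domain) :
    ‖symmPart T0 T0t hW u‖ ≤ 2 * lam * ‖(u : H)‖ := by
  refine norm_le_of_dense_inner_le hF.dense' (by have := hF.lam_pos; positivity) fun φ hφ => ?_
  calc ‖⟪symmPart T0 T0t hW u, φ⟫_ℂ‖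
      = ‖⟪(u : H), T0 ⟨φ, hφ⟩ + T0t ⟨φ, hF.dom_eq ▸ hφ⟩⟫_ℂ‖ := by
        rw [inner_symmPart_of_mem hF u ⟨φ, hφ⟩]
    _ ≤ ‖(u : H)‖ * (2 * lam * ‖φ‖) :=
        (norm_inner_le_norm _ _).trans (by gcongr; exact hF.bound φ hφ)
    _ = 2 * lam * ‖(u : H)‖ * ‖φ‖ := by ring

end GraphSpace

section Realisation

variable {T0 T0t : H →ₗ.[ℂ] H} {lam mu : ℝ} {hW : T0t.adjoint.domain = T0.adjoint.domain}

theorem re_inner_symmPart_self_nonneg (hF : IsFriedrichsPair T0 T0t lam mu)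
    (u : T0t.adjoint.domain) : 0 ≤ (⟪(u : H), symmPart T0 T0t hW u⟫_ℂ).re := by
  refine re_inner_map_self_nonneg_of_dense _ (norm_symmPart_le hF.toIsDualPairT12) hF.dense'
    (fun φ hφ => hF.le_adjoint_right.1 hφ) (fun φ hφ => ?_) u
  have hsymm : symmPart T0 T0t hW φ = T0 ⟨φ, hφ⟩ + T0t ⟨φ, hF.dom_eq ▸ hφ⟩ := by
    rw [symmPart, LinearMap.add_apply, LinearPMap.toFun_eq_coe,
      adjoint_apply_of_mem hF.toIsDualPairT12 φ hφ, tildeT1_apply_of_mem hF.toIsDualPairT12 φ hφ]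
  rw [hsymm]
  exact (by have := hF.mu_pos; positivity : (0 : ℝ) ≤ 2 * mu * ‖(φ : H)‖ ^ 2).trans
    (hF.coercive φ hφ)

theorem re_bform_self_nonneg_of_accretive (hF : IsDualPairT12 T0 T0t lam) {T : H →ₗ.[ℂ] H}
    (hT0T : T0 ≤ T) (hTT1 : T ≤ T0t.adjoint)
    (hacc : ∀ u : T.domain, 0 ≤ (pInner (T u) (u : H)).re) (u : T.domain) :
    0 ≤ (bform T0 T0t hW ⟨(u : H), hTT1.1 u.2⟩ ⟨(u : H), hTT1.1 u.2⟩).re := by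
  set u₁ : T0t.adjoint.domain := ⟨(u : H), hTT1.1 u.2⟩
  have hshift : ∀ φ ∈ T0.domain, -(2 * lam * ‖(u : H) + φ‖ ^ 2) ≤ (bform T0 T0t hW u₁ u₁).re := by
    intro φ hφ
    set v : T.domain := u + ⟨φ, hT0T.1 hφ⟩
    set v₁ : T0t.adjoint.domain := ⟨(v : H), hTT1.1 v.2⟩
    have hv₁ : v₁ = u₁ + ⟨φ, hF.le_adjoint_right.1 hφ⟩ := rfl
    have hTv : T v = T0t.adjoint v₁ := hTT1.2 rfl
    have hsymm : (⟪(v : H), symmPart T0 T0t hW v₁⟫_ℂ).re ≤ 2 * lam * ‖(u : H) + φ‖ ^ 2 :=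
      calc (⟪(v : H), symmPart T0 T0t hW v₁⟫_ℂ).re
          ≤ ‖(v : H)‖ * ‖symmPart T0 T0t hW v₁‖ :=
            (Complex.re_le_norm _).trans (norm_inner_le_norm _ _)
        _ ≤ ‖(v : H)‖ * (2 * lam * ‖(v : H)‖) := by gcongr; exact norm_symmPart_le hF v₁
        _ = 2 * lam * ‖(u : H) + φ‖ ^ 2 := by rw [show (v : H) = u + φ from rfl]; ring
    calc -(2 * lam * ‖(u : H) + φ‖ ^ 2)
        ≤ 2 * (pInner (T v) (v : H)).re - (⟪(v : H), symmPart T0 T0t hW v₁⟫_ℂ).re := by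
          linarith [hacc v]
      _ = (bform T0 T0t hW v₁ v₁).re := by
          rw [hTv, pInner]
          linarith [two_mul_re_inner_adjoint_self (hW := hW) v₁]
      _ = (bform T0 T0t hW u₁ u₁).re := by
          rw [hv₁, bform_add_self_of_mem hF _ _ hφ]
  have hall := hF.dense'.induction
    (P := fun φ => -(2 * lam * ‖(u : H) + φ‖ ^ 2) ≤ (bform T0 T0t hW u₁ u₁).re) hshift
    (isClosed_le (by fun_prop) continuous_const)
  simpa using hall (-(u : H))

theorem accretive_iff_re_bform_self_nonneg (hF : IsFriedrichsPair T0 T0t lam mu)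
    {T : H →ₗ.[ℂ] H} (hT0T : T0 ≤ T) (hTT1 : T ≤ T0t.adjoint) :
    (∀ u : T.domain, 0 ≤ (pInner (T u) (u : H)).re) ↔
      ∀ u : T.domain, 0 ≤ (bform T0 T0t hW ⟨(u : H), hTT1.1 u.2⟩ ⟨(u : H), hTT1.1 u.2⟩).re := by
  refine ⟨re_bform_self_nonneg_of_accretive hF.toIsDualPairT12 hT0T hTT1, fun hbform u => ?_⟩
  have hTu : T u = T0t.adjoint ⟨(u : H), hTT1.1 u.2⟩ := hTT1.2 rfl
  have hsplit := two_mul_re_inner_adjoint_self (hW := hW) ⟨(u : H), hTT1.1 u.2⟩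
  rw [hTu, pInner]
  linarith [hbform u, re_inner_symmPart_self_nonneg (hW := hW) hF ⟨(u : H), hTT1.1 u.2⟩]

theorem skew_accretive_iff_re_bform_self_nonneg {T : H →ₗ.[ℂ] H} (hTT1 : T ≤ T0t.adjoint) :
    (∀ u : T.domain,
        0 ≤ (pInner ((2 : ℂ)⁻¹ • (T0t.adjoint ⟨(u : H), hTT1.1 u.2⟩
              - T0.adjoint ⟨(u : H), hW.le (hTT1.1 u.2)⟩)) (u : H)).re) ↔
      ∀ u : T.domain, 0 ≤ (bform T0 T0t hW ⟨(u : H), hTT1.1 u.2⟩ ⟨(u : H), hTT1.1 u.2⟩).re :=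
  forall_congr' fun u => by
    rw [re_pInner_half_sub_self ⟨(u : H), hTT1.1 u.2⟩, mul_nonneg_iff_of_pos_left (by norm_num)]

end Realisation

/-- Lemma 3.1: for a realisation `T₀ ⊆ T ⊆ T₁`, the following are equivalent:
(i) `T` is accretive; (ii) `L := L₁|_{dom T}` is accretive; (iii) `dom T ⊆ W⁺`. -/
theorem accretive_iff_skew_accretive_iff_nonneg
    (T0 T0t : H →ₗ.[ℂ] H) (lam mu : ℝ) (hF : IsFriedrichsPair T0 T0t lam mu)
    (hW : T0t.adjoint.domain = T0.adjoint.domain)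
    (T : H →ₗ.[ℂ] H) (hT0T : T0 ≤ T) (hTT1 : T ≤ T0t.adjoint) :
    ((∀ u : T.domain, 0 ≤ (pInner (T u) (u : H)).re) ↔
      (∀ u : T.domain,
        0 ≤ (pInner ((2 : ℂ)⁻¹ • (T0t.adjoint ⟨(u : H), hTT1.1 u.2⟩
              - T0.adjoint ⟨(u : H), hW.le (hTT1.1 u.2)⟩)) (u : H)).re)) ∧
    ((∀ u : T.domain,
        0 ≤ (pInner ((2 : ℂ)⁻¹ • (T0t.adjoint ⟨(u : H), hTT1.1 u.2⟩
              - T0.adjoint ⟨(u : H), hW.le (hTT1.1 u.2)⟩)) (u : H)).re) ↔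
      (∀ u : T.domain,
        0 ≤ (bform T0 T0t hW ⟨(u : H), hTT1.1 u.2⟩ ⟨(u : H), hTT1.1 u.2⟩).re)) := by
  have hskew := skew_accretive_iff_re_bform_self_nonneg (hW := hW) hTT1
  exact ⟨(accretive_iff_re_bform_self_nonneg hF hT0T hTT1).trans hskew.symm, hskew⟩
end
end

section
/- Let (T0, T̃0) be a joint pair of abstract Friedrichs operators on a complex Hilbert space H and let T be a realisation of T0 (T0 ⊆ T ⊆ T1). Then the following statements are equivalent: (i) T is m-accretive; (ii) L := L1 restricted to dom T is m-accretive; (iii) dom T satisfies (V)-boundary conditions. -/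
open scoped InnerProductSpace
open Filter Topology LinearPMap

noncomputable section

variable {H : Type*} [NormedAddCommGroup H] [InnerProductSpace ℂ H] [CompleteSpace H]

/-! On the graph space the boundary form satisfies `Re [u|u] = 2 Re ⟨T₁u, u⟩ - ⟨Su, u⟩`, where
`S ≥ 0` is the bounded extension of `T₀ + T̃₀`; hence `T₁` is accretive on `W⁺` and `T̃₁` on `W⁻`.

If `T` is m-accretive and `v ∈ V^[⊥]`, solving `u + T₁u = v + T̃₁v` in `V` gives
`Re [v|v] ≤ (2 + ‖S‖) ‖v‖²`; as `[·|·]` ignores `D`, `v` may be shifted by an element of `D` to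
make `‖v‖` small, so `V^[⊥] ⊆ W⁻`. The adjoint of the resolvent of `T` shows that `T̃₁` is
m-accretive on `V^[⊥]`, and the same argument with the roles of `T₁` and `T̃₁` exchanged gives
`V^[⊥][⊥] ⊆ W⁺`; `T₁` is therefore accretive on `V^[⊥][⊥] ⊇ V`, and maximality of
m-accretive operators gives `V = V^[⊥][⊥]`.
Conversely, under the (V)-boundary conditions `T₁|_V` is accretive with closed graph, so the range
of `I + T` is closed, and a vector `g` orthogonal to it satisfies `T̃₁ g = -g` and `g ∈ V^[⊥] ⊆ W⁻`,
forcing `g = 0`.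

Finally `L₁` and `-L₁` satisfy the same axioms as `T₁` and `T̃₁` (with `S = 0`) and have the same
boundary form, which turns (ii) ⟺ (iii) into an instance of (i) ⟺ (iii). -/

section Abstract

open RCLike ComplexConjugate

variable {𝕜 E : Type*} [RCLike 𝕜] [NormedAddCommGroup E] [InnerProductSpace 𝕜 E]
  {W : Submodule 𝕜 E}

section BoundaryForm

variable (A B : W →ₗ[𝕜] E)

/-- The paper's `[u|v] = ⟨A u, v⟩ - ⟨u, B v⟩`; its inner product is Mathlib's with the arguments
swapped. -/
def bdryForm (u v : W) : 𝕜 := ⟪(v : E), A u⟫_𝕜 - ⟪B v, (u : E)⟫_𝕜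

lemma bdryForm_add_left (u u' v : W) :
    bdryForm A B (u + u') v = bdryForm A B u v + bdryForm A B u' v := by
  simp only [bdryForm, _root_.map_add, Submodule.coe_add, inner_add_right]
  ring

lemma bdryForm_smul_left (c : 𝕜) (u v : W) :
    bdryForm A B (c • u) v = c * bdryForm A B u v := by
  simp only [bdryForm, _root_.map_smul, Submodule.coe_smul, inner_smul_right]
  ring

lemma bdryForm_sub_left (u u' v : W) :
    bdryForm A B (u - u') v = bdryForm A B u v - bdryForm A B u' v := by
  simp only [bdryForm, _root_.map_sub, Submodule.coe_sub, inner_sub_right]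
  ring

lemma bdryForm_sub_right (u v v' : W) :
    bdryForm A B u (v - v') = bdryForm A B u v - bdryForm A B u v' := by
  simp only [bdryForm, _root_.map_sub, Submodule.coe_sub, inner_sub_left]
  ring

def bdryOrth (X : Set W) : Submodule 𝕜 W where
  carrier := {u | ∀ v ∈ X, bdryForm A B u v = 0}
  add_mem' hu hu' v hv := by rw [bdryForm_add_left, hu v hv, hu' v hv, add_zero]
  zero_mem' v _ := by simp [bdryForm]
  smul_mem' c u hu v hv := by rw [bdryForm_smul_left, hu v hv, mul_zero]

lemma mem_bdryOrth {X : Set W} {u : W} :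
    u ∈ bdryOrth A B X ↔ ∀ v ∈ X, bdryForm A B u v = 0 := Iff.rfl

def IsVBC (V : Set W) : Prop :=
  V ⊆ {u | 0 ≤ re (bdryForm A B u u)} ∧
    (bdryOrth A B V : Set W) ⊆ {u | re (bdryForm A B u u) ≤ 0} ∧
    V = bdryOrth A B (bdryOrth A B V)

variable {A B}

lemma isVBC_congr {A' B' : W →ₗ[𝕜] E} (hAB : bdryForm A B = bdryForm A' B') (V : Set W) :
    IsVBC A B V ↔ IsVBC A' B' V := by
  have hX : bdryOrth A B = bdryOrth A' B' := by
    ext X u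
    simp only [mem_bdryOrth, hAB]
  rw [IsVBC, IsVBC, hX, hAB]

end BoundaryForm

section Accretive

variable (A : W →ₗ[𝕜] E)

def IsAccretiveOn (V : Set W) : Prop := ∀ u ∈ V, 0 ≤ re ⟪(u : E), A u⟫_𝕜

def IsMAccretiveOn (V : Set W) : Prop :=
  IsAccretiveOn A V ∧ ∀ f : E, ∃ u ∈ V, (u : E) + A u = f

variable {A}

lemma norm_le_norm_add_of_re_inner_nonneg {x y : E} (h : 0 ≤ re ⟪x, y⟫_𝕜) :
    ‖x‖ ≤ ‖x + y‖ := by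
  have : ‖x‖ ^ 2 ≤ ‖x‖ * ‖x + y‖ :=
    calc ‖x‖ ^ 2 ≤ re ⟪x, x + y⟫_𝕜 := by
          rw [inner_add_right, _root_.map_add, inner_self_eq_norm_sq]; linarith
      _ ≤ ‖x‖ * ‖x + y‖ := re_inner_le_norm _ _
  nlinarith [norm_nonneg x, norm_nonneg (x + y)]

lemma IsMAccretiveOn.subset_of_isAccretiveOn {V : Set W} {V' : Submodule 𝕜 W}
    (hA : IsMAccretiveOn A V) (hVV' : V ⊆ V') (hA' : IsAccretiveOn A V') :
    (V' : Set W) ⊆ V := by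
  intro w hw
  obtain ⟨u, hu, hwu⟩ := hA.2 ((w : E) + A w)
  have hz : ((w - u : W) : E) + A (w - u) = 0 := by
    rw [_root_.map_sub, Submodule.coe_sub, ← sub_eq_zero.mpr hwu.symm]; abel
  have := norm_le_norm_add_of_re_inner_nonneg (hA' _ (V'.sub_mem hw (hVV' hu)))
  rw [hz, norm_zero, norm_le_zero_iff, ZeroMemClass.coe_eq_zero, sub_eq_zero] at this
  exact this ▸ hu

variable {V : Submodule 𝕜 W}

lemma IsMAccretiveOn.exists_resolvent (hA : IsMAccretiveOn A V) :
    ∃ R : E →L[𝕜] E, ∀ u ∈ V, R ((u : E) + A u) = u := by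
  let Φ : V →ₗ[𝕜] E := (W.subtype + A) ∘ₗ V.subtype
  have norm_le (u : V) : ‖((u : W) : E)‖ ≤ ‖Φ u‖ :=
    norm_le_norm_add_of_re_inner_nonneg (hA.1 u u.2)
  have hΦ : Function.Bijective Φ := by
    refine ⟨(injective_iff_map_eq_zero Φ).2 fun u hu => ?_, fun f => ?_⟩
    · simpa [hu] using norm_le u
    · obtain ⟨u, hu, rfl⟩ := hA.2 f
      exact ⟨⟨u, hu⟩, rfl⟩
  let e := LinearEquiv.ofBijective Φ hΦ
  refine ⟨(W.subtype ∘ₗ V.subtype ∘ₗ e.symm.toLinearMap).mkContinuous 1 fun f => ?_,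
    fun u hu => ?_⟩
  · simpa [e] using norm_le (e.symm f)
  · simp only [LinearMap.mkContinuous_apply, LinearMap.coe_comp, Function.comp_apply]
    rw [show (u : E) + A u = e ⟨u, hu⟩ from rfl, LinearEquiv.coe_coe, e.symm_apply_apply]
    rfl

/-- The witness is `R† f` for the resolvent `R` of `A`. -/
lemma IsMAccretiveOn.exists_inner_eq [CompleteSpace E] (hA : IsMAccretiveOn A V) (f : E) :
    ∃ v : E, ∀ u ∈ V, ⟪v, A u⟫_𝕜 = ⟪f - v, (u : E)⟫_𝕜 := by
  obtain ⟨R, hR⟩ := hA.exists_resolvent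
  refine ⟨ContinuousLinearMap.adjoint R f, fun u hu => ?_⟩
  have hRA : R (A u) = u - R u := eq_sub_of_add_eq' ((R.map_add _ _).symm.trans (hR u hu))
  rw [ContinuousLinearMap.adjoint_inner_left, hRA, inner_sub_right, inner_sub_left,
    ContinuousLinearMap.adjoint_inner_left]

/-- Accretivity makes the range of `I + A` closed, so it is everything once it is dense. -/
lemma IsAccretiveOn.isMAccretiveOn [CompleteSpace E] (hA : IsAccretiveOn A V)
    (hclosed : ∀ (u : ℕ → W) (x y : E), (∀ n, u n ∈ V) →
      Tendsto (fun n => (u n : E)) atTop (𝓝 x) → Tendsto (fun n => A (u n)) atTop (𝓝 y) →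
      ∃ w ∈ V, (w : E) = x ∧ A w = y)
    (hdense : ∀ g : E, (∀ u ∈ V, ⟪g, (u : E) + A u⟫_𝕜 = 0) → g = 0) :
    IsMAccretiveOn A V := by
  refine ⟨hA, fun f => ?_⟩
  let M : Submodule 𝕜 E := V.map (W.subtype + A)
  have hM : IsClosed (M : Set E) := by
    refine IsSeqClosed.isClosed fun x f hx hxf => ?_
    choose u hu hux using hx
    have hdist (m n : ℕ) : dist (u m : E) (u n) ≤ dist (x m) (x n) := by
      rw [dist_eq_norm, dist_eq_norm, ← hux, ← hux]
      simpa [add_sub_add_comm] using norm_le_norm_add_of_re_inner_nonneg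
        (hA _ (V.sub_mem (hu m) (hu n)))
    have hcau : CauchySeq fun n => (u n : E) :=
      Metric.cauchySeq_iff.2 fun ε hε => (Metric.cauchySeq_iff.1 hxf.cauchySeq ε hε).imp
        fun N hN m hm n hn => (hdist m n).trans_lt (hN m hm n hn)
    obtain ⟨z, hz⟩ := cauchySeq_tendsto_of_complete hcau
    have hAu : Tendsto (fun n => A (u n)) atTop (𝓝 (f - z)) := by
      simpa [← hux] using hxf.sub hz
    obtain ⟨w, hw, rfl, hAw⟩ := hclosed u z (f - z) hu hz hAu
    exact ⟨w, hw, by simp [hAw]⟩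
  have hMtop : M = ⊤ := by
    rw [← hM.submodule_topologicalClosure_eq, Submodule.topologicalClosure_eq_top_iff,
      Submodule.eq_bot_iff]
    exact fun g hg => hdense g fun u hu => (Submodule.mem_orthogonal' M g).1 hg _ ⟨u, hu, rfl⟩
  obtain ⟨u, hu, huf⟩ := hMtop ▸ Submodule.mem_top (x := f)
  exact ⟨u, hu, huf⟩

end Accretive

/-- The abstract setting: `W` plays the graph space, `D` the common domain of `T₀` and `T̃₀`,
`A` and `B` the operators `T₁` and `T̃₁`, and `S` the bounded extension of `T₀ + T̃₀`. The fields
`adjoint_core` and `maximal` say that `A` is the adjoint of `B|_D`. -/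
structure IsFriedrichsGraphPair (D : Submodule 𝕜 E) (A B : W →ₗ[𝕜] E) (S : E →L[𝕜] E) :
    Prop where
  le : D ≤ W
  dense : Dense (D : Set E)
  adjoint_core : ∀ u φ : W, (φ : E) ∈ D → ⟪A u, φ⟫_𝕜 = ⟪(u : E), B φ⟫_𝕜
  maximal : ∀ x y : E, (∀ φ : W, (φ : E) ∈ D → ⟪x, B φ⟫_𝕜 = ⟪y, φ⟫_𝕜) →
    ∃ u : W, (u : E) = x ∧ A u = y
  add_eq : ∀ u : W, A u + B u = S u
  isPositive : S.IsPositive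

namespace IsFriedrichsGraphPair

variable {D : Submodule 𝕜 E} {A B : W →ₗ[𝕜] E} {S : E →L[𝕜] E}
  (h : IsFriedrichsGraphPair D A B S)
include h

lemma right_apply_eq_sub (u : W) : B u = S u - A u := by rw [← h.add_eq]; abel

lemma adjoint_core_swap (u φ : W) (hφ : (φ : E) ∈ D) : ⟪B u, φ⟫_𝕜 = ⟪(u : E), A φ⟫_𝕜 := by
  rw [h.right_apply_eq_sub, inner_sub_left, h.adjoint_core u φ hφ,
    h.isPositive.inner_left_eq_inner_right, ← h.add_eq, inner_add_right]
  ring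

lemma maximal_swap (x y : E) (hxy : ∀ φ : W, (φ : E) ∈ D → ⟪x, A φ⟫_𝕜 = ⟪y, φ⟫_𝕜) :
    ∃ u : W, (u : E) = x ∧ B u = y := by
  obtain ⟨u, rfl, hu⟩ := h.maximal x (S x - y) fun φ hφ => by
    rw [h.right_apply_eq_sub, inner_sub_right, hxy φ hφ,
      ← h.isPositive.inner_left_eq_inner_right, inner_sub_left]
  exact ⟨u, rfl, by rw [h.right_apply_eq_sub, hu, sub_sub_cancel]⟩

protected lemma swap : IsFriedrichsGraphPair D B A S where
  le := h.le
  dense := h.dense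
  adjoint_core := h.adjoint_core_swap
  maximal := h.maximal_swap
  add_eq u := by rw [add_comm, h.add_eq]
  isPositive := h.isPositive

lemma inner_add_comm (u v : W) :
    ⟪(v : E), A u⟫_𝕜 + ⟪(v : E), B u⟫_𝕜 = ⟪A v, (u : E)⟫_𝕜 + ⟪B v, (u : E)⟫_𝕜 := by
  rw [← inner_add_right, ← inner_add_left, h.add_eq, h.add_eq,
    h.isPositive.inner_left_eq_inner_right]

lemma conj_bdryForm (u v : W) : conj (bdryForm A B v u) = bdryForm A B u v := by
  simp only [bdryForm, _root_.map_sub, inner_conj_symm]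
  linear_combination (h.inner_add_comm u v).symm

lemma bdryForm_eq_zero_comm (u v : W) : bdryForm A B u v = 0 ↔ bdryForm A B v u = 0 := by
  rw [← h.conj_bdryForm, map_eq_zero]

lemma bdryForm_eq_zero_of_mem_bdryOrth {X : Set W} {u v : W} (hv : v ∈ bdryOrth A B X)
    (hu : u ∈ X) : bdryForm A B u v = 0 :=
  (h.bdryForm_eq_zero_comm _ _).2 (hv u hu)

lemma subset_bdryOrth_bdryOrth (X : Set W) : X ⊆ bdryOrth A B (bdryOrth A B X) :=
  fun _ hu => (mem_bdryOrth A B).2 fun _ hv => h.bdryForm_eq_zero_of_mem_bdryOrth hv hu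

lemma bdryForm_swap (u v : W) : bdryForm B A u v = -bdryForm A B u v := by
  rw [← h.conj_bdryForm]
  simp only [bdryForm, _root_.map_sub, inner_conj_symm]
  ring

lemma bdryForm_core_right (u φ : W) (hφ : (φ : E) ∈ D) : bdryForm A B u φ = 0 := by
  rw [bdryForm, ← inner_conj_symm, h.adjoint_core u φ hφ, inner_conj_symm, sub_self]

lemma bdryForm_sub_core_right (u v φ : W) (hφ : (φ : E) ∈ D) :
    bdryForm A B u (v - φ) = bdryForm A B u v := by
  rw [bdryForm_sub_right, h.bdryForm_core_right u φ hφ, sub_zero]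

lemma bdryForm_sub_core_left (u v φ : W) (hφ : (φ : E) ∈ D) :
    bdryForm A B (u - φ) v = bdryForm A B u v := by
  rw [bdryForm_sub_left, (h.bdryForm_eq_zero_comm _ _).mp (h.bdryForm_core_right v φ hφ),
    sub_zero]

lemma re_bdryForm_self (u : W) :
    re (bdryForm A B u u) = 2 * re ⟪(u : E), A u⟫_𝕜 - re ⟪(u : E), S u⟫_𝕜 := by
  rw [bdryForm, h.right_apply_eq_sub, inner_sub_left, _root_.map_sub, _root_.map_sub,
    inner_re_symm (S u), inner_re_symm (A u)]
  ring

lemma re_bdryForm_self' (u : W) :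
    re (bdryForm A B u u) = re ⟪(u : E), S u⟫_𝕜 - 2 * re ⟪(u : E), B u⟫_𝕜 := by
  rw [← neg_neg (bdryForm A B u u), ← h.bdryForm_swap, _root_.map_neg, h.swap.re_bdryForm_self]
  ring

lemma re_inner_nonneg_of_re_bdryForm_nonneg {u : W} (hu : 0 ≤ re (bdryForm A B u u)) :
    0 ≤ re ⟪(u : E), A u⟫_𝕜 := by
  have := h.isPositive.re_inner_nonneg_right u
  rw [h.re_bdryForm_self] at hu
  linarith

lemma re_inner_nonneg_of_re_bdryForm_nonpos {u : W} (hu : re (bdryForm A B u u) ≤ 0) :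
    0 ≤ re ⟪(u : E), B u⟫_𝕜 := by
  have := h.isPositive.re_inner_nonneg_right u
  rw [h.re_bdryForm_self'] at hu
  linarith

lemma re_bdryForm_le_of_isMAccretiveOn {V : Set W} (hA : IsMAccretiveOn A V) {v : W}
    (hv : ∀ u ∈ V, bdryForm A B u v = 0) :
    re (bdryForm A B v v) ≤ (2 + ‖S‖) * ‖(v : E)‖ ^ 2 := by
  obtain ⟨u, hu, huv⟩ := hA.2 (v + B v)
  have hvu : ⟪(v : E), v + B v⟫_𝕜 = ⟪(u : E) + A u, u⟫_𝕜 :=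
    calc ⟪(v : E), v + B v⟫_𝕜 = ⟪(v : E), u + A u⟫_𝕜 := by rw [huv]
      _ = ⟪(v : E) + B v, u⟫_𝕜 := by
        rw [inner_add_right, inner_add_left, sub_eq_zero.1 (hv u hu)]
      _ = ⟪(u : E) + A u, u⟫_𝕜 := by rw [huv]
  have hB : 0 ≤ ‖(v : E)‖ ^ 2 + re ⟪(v : E), B v⟫_𝕜 := by
    have hre := congrArg re hvu
    rw [inner_add_right, inner_add_left, _root_.map_add, _root_.map_add, inner_self_eq_norm_sq,
      inner_self_eq_norm_sq, inner_re_symm (A u)] at hre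
    nlinarith [hA.1 u hu]
  have hS : re ⟪(v : E), S v⟫_𝕜 ≤ ‖S‖ * ‖(v : E)‖ ^ 2 :=
    (re_inner_le_norm _ _).trans (by nlinarith [S.le_opNorm v, norm_nonneg (v : E)])
  rw [h.re_bdryForm_self']
  nlinarith

/-- `[·|·]` only sees `v` modulo `D`, so `v` may be replaced by `v - φ` of arbitrarily small
norm. -/
lemma re_bdryForm_nonpos_of_isMAccretiveOn {V : Set W} (hA : IsMAccretiveOn A V) {v : W}
    (hv : ∀ u ∈ V, bdryForm A B u v = 0) : re (bdryForm A B v v) ≤ 0 := by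
  have key (x : E) (hx : x ∈ D) : re (bdryForm A B v v) ≤ (2 + ‖S‖) * ‖(v : E) - x‖ ^ 2 := by
    have hvx := h.re_bdryForm_le_of_isMAccretiveOn hA (v := v - ⟨x, h.le hx⟩) fun u hu => by
      rw [h.bdryForm_sub_core_right _ _ _ hx, hv u hu]
    rwa [h.bdryForm_sub_core_left _ _ _ hx, h.bdryForm_sub_core_right _ _ _ hx] at hvx
  simpa using h.dense.induction
    (P := fun x => re (bdryForm A B v v) ≤ (2 + ‖S‖) * ‖(v : E) - x‖ ^ 2) key
    (isClosed_le continuous_const (by fun_prop)) (v : E)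

lemma isMAccretiveOn_bdryOrth [CompleteSpace E] {V : Submodule 𝕜 W} (hA : IsMAccretiveOn A V)
    (hDV : ∀ φ : W, (φ : E) ∈ D → φ ∈ V) : IsMAccretiveOn B (bdryOrth A B V) := by
  refine ⟨fun v hv => h.re_inner_nonneg_of_re_bdryForm_nonpos
    (h.re_bdryForm_nonpos_of_isMAccretiveOn hA fun u hu =>
      h.bdryForm_eq_zero_of_mem_bdryOrth hv hu), fun f => ?_⟩
  obtain ⟨x, hx⟩ := hA.exists_inner_eq f
  obtain ⟨v, rfl, hBv⟩ := h.maximal_swap x (f - x) fun φ hφ => hx φ (hDV φ hφ)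
  refine ⟨v, (mem_bdryOrth A B).2 fun u hu => ?_, by rw [hBv, add_sub_cancel]⟩
  rw [h.bdryForm_eq_zero_comm, bdryForm, hx u hu, hBv, sub_self]

lemma isVBC_of_isMAccretiveOn [CompleteSpace E] {V : Submodule 𝕜 W} (hA : IsMAccretiveOn A V)
    (hDV : ∀ φ : W, (φ : E) ∈ D → φ ∈ V) : IsVBC A B V := by
  have hplus (w : W) (hw : w ∈ bdryOrth A B (bdryOrth A B V)) : 0 ≤ re (bdryForm A B w w) := by
    have := h.swap.re_bdryForm_nonpos_of_isMAccretiveOn (h.isMAccretiveOn_bdryOrth hA hDV)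
      (v := w) fun v hv => by
        rw [h.bdryForm_swap, neg_eq_zero, h.bdryForm_eq_zero_comm]
        exact hw v hv
    rwa [h.bdryForm_swap, _root_.map_neg, neg_nonpos] at this
  have hVV := h.subset_bdryOrth_bdryOrth V
  refine ⟨fun u hu => hplus u (hVV hu), fun v hv => h.re_bdryForm_nonpos_of_isMAccretiveOn hA
    fun u hu => h.bdryForm_eq_zero_of_mem_bdryOrth hv hu, hVV.antisymm ?_⟩
  exact hA.subset_of_isAccretiveOn hVV fun w hw =>
    h.re_inner_nonneg_of_re_bdryForm_nonneg (hplus w hw)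

lemma exists_mem_bdryOrth_of_tendsto (X : Set W) (u : ℕ → W) (x y : E)
    (hu : ∀ n, u n ∈ bdryOrth A B X) (hx : Tendsto (fun n => (u n : E)) atTop (𝓝 x))
    (hy : Tendsto (fun n => A (u n)) atTop (𝓝 y)) :
    ∃ w ∈ bdryOrth A B X, (w : E) = x ∧ A w = y := by
  obtain ⟨w, rfl, rfl⟩ := h.maximal x y fun φ hφ => tendsto_nhds_unique
    (hx.inner tendsto_const_nhds)
    ((hy.inner tendsto_const_nhds).congr fun n => h.adjoint_core (u n) φ hφ)
  refine ⟨w, (mem_bdryOrth A B).2 fun v hv => tendsto_nhds_unique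
    ((tendsto_const_nhds.inner hy).sub (tendsto_const_nhds.inner hx))
    (tendsto_const_nhds.congr fun n => (hu n v hv).symm), rfl, rfl⟩

lemma isMAccretiveOn_of_isVBC [CompleteSpace E] {V : Submodule 𝕜 W} (hV : IsVBC A B V)
    (hDV : ∀ φ : W, (φ : E) ∈ D → φ ∈ V) : IsMAccretiveOn A V := by
  obtain ⟨hplus, hminus, hVeq⟩ := hV
  have hmem (w : W) : w ∈ V ↔ w ∈ bdryOrth A B (bdryOrth A B V) := Set.ext_iff.1 hVeq w
  refine IsAccretiveOn.isMAccretiveOn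
    (fun u hu => h.re_inner_nonneg_of_re_bdryForm_nonneg (hplus hu)) ?_ ?_
  · intro u x y hu hx hy
    obtain ⟨w, hw, hwx, hwy⟩ :=
      h.exists_mem_bdryOrth_of_tendsto _ u x y (fun n => (hmem _).1 (hu n)) hx hy
    exact ⟨w, (hmem w).2 hw, hwx, hwy⟩
  · intro g hg
    obtain ⟨v, rfl, hBv⟩ := h.maximal_swap g (-g) fun φ hφ => by
      have := hg φ (hDV φ hφ)
      rw [inner_add_right] at this
      rw [inner_neg_left]
      linear_combination this
    have hv : v ∈ bdryOrth A B V := (mem_bdryOrth A B).2 fun u hu =>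
      (h.bdryForm_eq_zero_comm _ _).1 (by
        rw [bdryForm, hBv, inner_neg_left, sub_neg_eq_add, add_comm, ← inner_add_right]
        exact hg u hu)
    have := h.re_inner_nonneg_of_re_bdryForm_nonpos (hminus hv)
    rw [hBv, inner_neg_right, _root_.map_neg, inner_self_eq_norm_sq, neg_nonneg] at this
    simpa using le_antisymm this (sq_nonneg _)

theorem isMAccretiveOn_iff_isVBC [CompleteSpace E] {V : Submodule 𝕜 W}
    (hDV : ∀ φ : W, (φ : E) ∈ D → φ ∈ V) : IsMAccretiveOn A V ↔ IsVBC A B V :=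
  ⟨fun hA => h.isVBC_of_isMAccretiveOn hA hDV, fun hV => h.isMAccretiveOn_of_isVBC hV hDV⟩

protected lemma skew :
    IsFriedrichsGraphPair D ((2 : 𝕜)⁻¹ • (A - B)) (-((2 : 𝕜)⁻¹ • (A - B))) 0 where
  le := h.le
  dense := h.dense
  adjoint_core u φ hφ := by
    simp only [LinearMap.smul_apply, LinearMap.sub_apply, LinearMap.neg_apply, inner_smul_left,
      inner_smul_right, inner_neg_right, inner_sub_left, inner_sub_right,
      h.adjoint_core u φ hφ, h.adjoint_core_swap u φ hφ, map_inv₀, map_ofNat]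
    ring
  maximal x y hxy := by
    obtain ⟨u, rfl, hBu⟩ := h.maximal_swap x ((2 : 𝕜)⁻¹ • S x - y) fun φ hφ => by
      have := hxy φ hφ
      simp only [LinearMap.smul_apply, LinearMap.sub_apply, LinearMap.neg_apply,
        h.right_apply_eq_sub φ, inner_smul_left, inner_smul_right, inner_neg_right,
        inner_sub_left, inner_sub_right, h.isPositive.inner_left_eq_inner_right, map_inv₀,
        map_ofNat] at this ⊢
      linear_combination -this
    have hAu : A u = S u - B u := by rw [← h.add_eq]; abel
    refine ⟨u, rfl, ?_⟩
    rw [LinearMap.smul_apply, LinearMap.sub_apply, hAu, hBu]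
    module
  add_eq u := by simp
  isPositive := ContinuousLinearMap.isPositive_zero

lemma bdryForm_skew :
    bdryForm ((2 : 𝕜)⁻¹ • (A - B)) (-((2 : 𝕜)⁻¹ • (A - B))) = bdryForm A B := by
  ext u v
  have := h.inner_add_comm u v
  simp only [bdryForm, LinearMap.smul_apply, LinearMap.sub_apply, LinearMap.neg_apply,
    inner_smul_left, inner_smul_right, inner_neg_left, inner_sub_left, inner_sub_right,
    map_inv₀, map_ofNat]
  linear_combination -(2 : 𝕜)⁻¹ * this

end IsFriedrichsGraphPair

lemma isMAccretiveOn_comap_subtype_iff {U : Submodule 𝕜 E} (hUW : U ≤ W) (G : W →ₗ[𝕜] E) :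
    IsMAccretiveOn G (U.comap W.subtype) ↔
      (∀ u : U, 0 ≤ re ⟪(u : E), G (Submodule.inclusion hUW u)⟫_𝕜) ∧
        ∀ f : E, ∃ u : U, (u : E) + G (Submodule.inclusion hUW u) = f := by
  refine ⟨fun ⟨hacc, hsurj⟩ => ⟨fun u => hacc (Submodule.inclusion hUW u) u.2, fun f => ?_⟩,
    fun ⟨hacc, hsurj⟩ => ⟨fun u hu => hacc ⟨u, hu⟩, fun f => ?_⟩⟩
  · obtain ⟨u, hu, rfl⟩ := hsurj f
    exact ⟨⟨u, hu⟩, rfl⟩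
  · obtain ⟨u, rfl⟩ := hsurj f
    exact ⟨Submodule.inclusion hUW u, u.2, rfl⟩

end Abstract

namespace IsFriedrichsPair

variable {T0 T0t : H →ₗ.[ℂ] H} {lam mu : ℝ} (hF : IsFriedrichsPair T0 T0t lam mu)
include hF

omit [CompleteSpace H] in
lemma isFormalAdjoint : T0.IsFormalAdjoint T0t := fun φ ψ => by
  simpa [pInner] using congrArg (starRingEnd ℂ) (hF.sym φ ψ)

omit [CompleteSpace H] in
lemma dense_domain_right : Dense (T0t.domain : Set H) := hF.dom_eq ▸ hF.dense'

lemma exists_isPositive_extension :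
    ∃ S : H →L[ℂ] H, S.IsPositive ∧
      ∀ φ : T0.domain, S φ = T0 φ + T0t ⟨φ, hF.dom_eq.le φ.2⟩ := by
  let f : T0.domain →ₗ[ℂ] H := T0.toFun + T0t.toFun ∘ₗ Submodule.inclusion hF.dom_eq.le
  have hdense : DenseRange T0.domain.subtype := hF.dense'.denseRange_val
  let S := f.extendOfNorm T0.domain.subtype
  have hS (φ : T0.domain) : S φ = f φ :=
    LinearMap.extendOfNorm_eq hdense ⟨2 * lam, fun φ => hF.bound φ φ.2⟩ φ
  refine ⟨S, ⟨fun x y => ?_, fun x => ?_⟩, hS⟩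
  · refine hdense.induction_on₂ (p := fun x y => ⟪S x, y⟫_ℂ = ⟪x, S y⟫_ℂ)
      (isClosed_eq (by fun_prop) (by fun_prop)) (fun φ ψ => ?_) x y
    simp only [Submodule.subtype_apply, hS, f, LinearMap.add_apply, LinearMap.comp_apply,
      inner_add_left, inner_add_right, LinearPMap.toFun_eq_coe]
    rw [add_comm]
    exact congrArg₂ (· + ·) (hF.isFormalAdjoint.symm _ ψ)
      (hF.isFormalAdjoint φ (Submodule.inclusion hF.dom_eq.le ψ))
  · refine hdense.induction_on (p := fun x => 0 ≤ RCLike.re ⟪S x, x⟫_ℂ) x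
      (isClosed_le continuous_const (by fun_prop)) fun φ => ?_
    show 0 ≤ RCLike.re ⟪S φ, φ⟫_ℂ
    have hφ : 2 * mu * ‖(φ : H)‖ ^ 2 ≤ RCLike.re ⟪S φ, φ⟫_ℂ := by
      rw [hS, inner_re_symm]
      exact hF.coercive φ φ.2
    nlinarith [hF.mu_pos]

lemma adjoint_apply_of_mem (u : T0†.domain) (hu : (u : H) ∈ T0t.domain) :
    T0† u = T0t ⟨u, hu⟩ :=
  ((hF.isFormalAdjoint.le_adjoint hF.dense').2 rfl).symm

lemma isFriedrichsGraphPair (hW : T0t†.domain = T0†.domain) {S : H →L[ℂ] H}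
    (hS : S.IsPositive) (hSD : ∀ φ : T0.domain, S φ = T0 φ + T0t ⟨φ, hF.dom_eq.le φ.2⟩) :
    IsFriedrichsGraphPair T0.domain T0t†.toFun (T0†.toFun ∘ₗ Submodule.inclusion hW.le) S where
  le := (hF.isFormalAdjoint.symm.le_adjoint hF.dense_domain_right).1
  dense := hF.dense'
  adjoint_core u φ hφ := by
    rw [LinearMap.comp_apply, LinearPMap.toFun_eq_coe, LinearPMap.toFun_eq_coe,
      hF.adjoint_apply_of_mem (Submodule.inclusion hW.le φ) (hF.dom_eq.le hφ)]
    exact adjoint_isFormalAdjoint hF.dense_domain_right u ⟨φ, hF.dom_eq.le hφ⟩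
  maximal x y hxy := by
    have key (ψ : T0t.domain) : ⟪y, (ψ : H)⟫_ℂ = ⟪x, T0t ψ⟫_ℂ := by
      have hψ : (ψ : H) ∈ T0.domain := hF.dom_eq.ge ψ.2
      rw [← hxy ⟨ψ, (hF.isFormalAdjoint.symm.le_adjoint hF.dense_domain_right).1 hψ⟩ hψ,
        LinearMap.comp_apply, LinearPMap.toFun_eq_coe, hF.adjoint_apply_of_mem _ ψ.2]
      rfl
    have hx := mem_adjoint_domain_of_exists x ⟨y, key⟩
    exact ⟨⟨x, hx⟩, rfl, adjoint_apply_eq hF.dense_domain_right ⟨x, hx⟩ key⟩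
  add_eq u := by
    refine hF.dense'.eq_of_inner_left ℂ fun φ hφ => ?_
    simp only [LinearMap.comp_apply, LinearPMap.toFun_eq_coe, inner_add_left,
      adjoint_isFormalAdjoint hF.dense_domain_right u ⟨φ, hF.dom_eq.le hφ⟩,
      adjoint_isFormalAdjoint hF.dense' (Submodule.inclusion hW.le u) ⟨φ, hφ⟩,
      hS.inner_left_eq_inner_right, hSD ⟨φ, hφ⟩, inner_add_right]
    exact add_comm _ _
  isPositive := hS

end IsFriedrichsPair

/-- Theorem 3.2: for a realisation `T₀ ⊆ T ⊆ T₁`, the following are equivalent: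
(i) `T` is m-accretive; (ii) `L := L₁|_{dom T}` is m-accretive;
(iii) `dom T` satisfies the (V)-boundary conditions. -/
theorem mAccretive_iff_skew_mAccretive_iff_VBC
    (T0 T0t : H →ₗ.[ℂ] H) (lam mu : ℝ) (hF : IsFriedrichsPair T0 T0t lam mu)
    (hW : T0t.adjoint.domain = T0.adjoint.domain)
    (T : H →ₗ.[ℂ] H) (hT0T : T0 ≤ T) (hTT1 : T ≤ T0t.adjoint) :
    (((∀ u : T.domain, 0 ≤ (pInner (T u) (u : H)).re) ∧
        (∀ f : H, ∃ u : T.domain, (u : H) + T u = f)) ↔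
      ((∀ u : T.domain,
          0 ≤ (pInner ((2 : ℂ)⁻¹ • (T0t.adjoint ⟨(u : H), hTT1.1 u.2⟩
                - T0.adjoint ⟨(u : H), hW.le (hTT1.1 u.2)⟩)) (u : H)).re) ∧
        (∀ f : H, ∃ u : T.domain,
          (u : H) + (2 : ℂ)⁻¹ • (T0t.adjoint ⟨(u : H), hTT1.1 u.2⟩
              - T0.adjoint ⟨(u : H), hW.le (hTT1.1 u.2)⟩) = f))) ∧
    (((∀ u : T.domain,
          0 ≤ (pInner ((2 : ℂ)⁻¹ • (T0t.adjoint ⟨(u : H), hTT1.1 u.2⟩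
                - T0.adjoint ⟨(u : H), hW.le (hTT1.1 u.2)⟩)) (u : H)).re) ∧
        (∀ f : H, ∃ u : T.domain,
          (u : H) + (2 : ℂ)⁻¹ • (T0t.adjoint ⟨(u : H), hTT1.1 u.2⟩
              - T0.adjoint ⟨(u : H), hW.le (hTT1.1 u.2)⟩) = f)) ↔
      VBC T0 T0t hW {w : ↥T0t.adjoint.domain | (w : H) ∈ T.domain}) := by
  obtain ⟨S, hS, hSD⟩ := hF.exists_isPositive_extension
  have h := hF.isFriedrichsGraphPair hW hS hSD
  have hDV (φ : T0t†.domain) (hφ : (φ : H) ∈ T0.domain) :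
      φ ∈ T.domain.comap T0t†.domain.subtype := hT0T.1 hφ
  have hT (u : T.domain) : T u = T0t† (Submodule.inclusion hTT1.1 u) := hTT1.2 rfl
  have hi := h.isMAccretiveOn_iff_isVBC hDV
  have hii := h.skew.isMAccretiveOn_iff_isVBC hDV
  rw [isVBC_congr h.bdryForm_skew] at hii
  rw [isMAccretiveOn_comap_subtype_iff hTT1.1] at hi hii
  simp_rw [hT]
  exact ⟨hi.trans hii.symm, hii⟩
end
end

section
/- Let (T0, T̃0) be a joint pair of abstract Friedrichs operators on a complex Hilbert space H and let M ∈ L(W;W') satisfy (M)-boundary conditions. Set V := ker(D − M). Then W2 := ker(D + M) ∩ W0^⊥ (Hilbert orthogonal complement in the graph space) is a closed subspace of W contained in W⁻, and W = V ∔ W2 (direct sum). -/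
open scoped InnerProductSpace
open Filter Topology LinearPMap

noncomputable section

variable {H : Type*} [NormedAddCommGroup H] [InnerProductSpace ℂ H] [CompleteSpace H]

/-!
The boundary form `[u|v] = ⟪T₁u, v⟫ - ⟪u, T̃₁v⟫` is hermitian, because `T₁ + T̃₁` is the bounded
self-adjoint extension of `T₀ + T̃₀` given by (T2), and it vanishes as soon as one argument lies
in `W₀`. With (M2) and polarization of (M1), `M` vanishes on `W₀` as well, so
`W₀ ⊆ ker (D - M) ∩ ker (D + M)`. Hence in a splitting `w = a + b` given by (M2), the graph
orthogonal projection of `b` onto `W₀` can be moved from `b` to `a`. For uniqueness: on `W₀^⊥`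
one has `T̃₁T₁u = -u`, so `[u|T₁u] = ‖u‖² + ‖T₁u‖²`, while on `ker (D - M) ∩ ker (D + M)` the
form `[u|·]` vanishes.
-/

namespace LinearPMap

variable {𝕜 E F : Type*} [RCLike 𝕜] [NormedAddCommGroup E] [InnerProductSpace 𝕜 E]
  [NormedAddCommGroup F] [InnerProductSpace 𝕜 F]

theorem IsClosed.closure_le {f g : E →ₗ.[𝕜] F} (hg : g.IsClosed) (h : f ≤ g) :
    f.closure ≤ g := by
  refine le_of_le_graph ?_
  rw [← (hg.isClosable.leIsClosable h).graph_closure_eq_closure_graph]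
  exact Submodule.topologicalClosure_minimal _ (le_graph_of_le h) hg

theorem IsFormalAdjoint.closure {T : E →ₗ.[𝕜] F} {S : F →ₗ.[𝕜] E} (h : T.IsFormalAdjoint S)
    (hT : T.IsClosable) : T.closure.IsFormalAdjoint S := by
  intro x y
  have hgraph : T.closure.graph ≤ {p : E × F | ⟪p.2, (y : F)⟫_𝕜 = ⟪p.1, S y⟫_𝕜} := by
    rw [← hT.graph_closure_eq_closure_graph]
    refine closure_minimal (fun p hp => ?_) ?_
    · obtain ⟨z, hz1, hz2⟩ := T.mem_graph_iff.mp hp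
      simpa [← hz1, ← hz2] using h z y
    · exact isClosed_eq (continuous_snd.inner continuous_const)
        (continuous_fst.inner continuous_const)
  exact hgraph (T.closure.mem_graph x)

/-- Orthogonal projection onto the graph, for the inner product `⟪x, x'⟫ + ⟪y, y'⟫` on `E × F`. -/
theorem IsClosed.exists_inner_add_inner_eq_zero [CompleteSpace E] [CompleteSpace F]
    {T : E →ₗ.[𝕜] F} (hT : T.IsClosed) (p : E × F) :
    ∃ x : T.domain, ∀ y : T.domain, ⟪(y : E), p.1 - x⟫_𝕜 + ⟪T y, p.2 - T x⟫_𝕜 = 0 := by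
  let K : Submodule 𝕜 (WithLp 2 (E × F)) :=
    T.graph.comap (WithLp.linearEquiv 2 𝕜 (E × F)).toLinearMap
  have : CompleteSpace K :=
    (hT.preimage (WithLp.prod_continuous_ofLp 2 E F)).completeSpace_coe
  obtain ⟨q, hq, r, hr, hqr⟩ := K.exists_add_mem_mem_orthogonal (WithLp.toLp 2 p)
  obtain ⟨x, hx⟩ := T.mem_graph_iff.mp hq
  refine ⟨x, fun y => ?_⟩
  have hr_eq : WithLp.ofLp r = (p.1 - x, p.2 - T x) := by
    rw [eq_sub_of_add_eq' hqr.symm]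
    ext <;> simp [hx.1, hx.2]
  simpa [hr_eq] using (K.mem_orthogonal r).mp hr (WithLp.toLp 2 (y, T y)) (T.mem_graph y)

end LinearPMap

namespace IsDualPairT12

variable {T0 T0t : H →ₗ.[ℂ] H} {lam : ℝ} (hD : IsDualPairT12 T0 T0t lam)
include hD

omit [CompleteSpace H] in
theorem dense_domain_right_s4 : Dense (T0t.domain : Set H) :=
  hD.dom_eq ▸ hD.dense'

omit [CompleteSpace H] in
theorem isFormalAdjoint_s4 : T0t.IsFormalAdjoint T0 :=
  fun ψ φ => (hD.sym φ ψ).symm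

theorem le_adjoint_right_s4 : T0 ≤ T0t† :=
  hD.isFormalAdjoint_s4.le_adjoint hD.dense_domain_right_s4

theorem closure_le : T0.closure ≤ T0t† :=
  (adjoint_isClosed hD.dense_domain_right_s4).closure_le hD.le_adjoint_right_s4

theorem isClosable : T0.IsClosable :=
  (adjoint_isClosed hD.dense_domain_right_s4).isClosable.leIsClosable hD.le_adjoint_right_s4

/-- The bounded extension `S̄ ∈ L(H)` of `T₀ + T̃₀`, which exists by (T2). -/
def sumCLM : H →L[ℂ] H :=
  (LinearMap.mkContinuous (T0.toFun + T0t.toFun ∘ₗ Submodule.inclusion hD.dom_eq.le) (2 * lam)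
    fun φ => hD.bound φ φ.2).extend T0.domain.subtypeL

theorem sumCLM_apply (φ : T0.domain) :
    hD.sumCLM φ = T0 φ + T0t ⟨φ, hD.dom_eq.le φ.2⟩ :=
  ContinuousLinearMap.extend_eq _ hD.dense'.denseRange_val
    isUniformEmbedding_subtype_val.isUniformInducing φ

theorem inner_sumCLM_left (x y : H) : ⟪hD.sumCLM x, y⟫_ℂ = ⟪x, hD.sumCLM y⟫_ℂ := by
  refine eqOn_closure₂ (s := T0.domain) (t := T0.domain) (f := fun x y => ⟪hD.sumCLM x, y⟫_ℂ)
    (g := fun x y => ⟪x, hD.sumCLM y⟫_ℂ) (fun φ hφ ψ hψ => ?_)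
    ((hD.sumCLM.continuous.comp continuous_fst).inner continuous_snd)
    (continuous_fst.inner (hD.sumCLM.continuous.comp continuous_snd))
    x (by simp [hD.dense'.closure_eq]) y (by simp [hD.dense'.closure_eq])
  rw [hD.sumCLM_apply ⟨φ, hφ⟩, hD.sumCLM_apply ⟨ψ, hψ⟩, inner_add_left, inner_add_right,
    hD.isFormalAdjoint_s4 ⟨φ, hD.dom_eq.le hφ⟩ ⟨ψ, hψ⟩,
    hD.isFormalAdjoint_s4.symm ⟨φ, hφ⟩ ⟨ψ, hD.dom_eq.le hψ⟩]
  ring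

/-- Both sides are adjoints of `T₀ + T̃₀`, tested on the dense `dom T₀`. -/
theorem adjoint_add_adjoint_eq_sumCLM (hW : T0t†.domain = T0†.domain) (u : T0t†.domain) :
    T0t† u + T0† ⟨u, hW.le u.2⟩ = hD.sumCLM u := by
  refine hD.dense'.eq_of_inner_left (𝕜 := ℂ) fun φ hφ => ?_
  rw [inner_add_left, inner_sumCLM_left, hD.sumCLM_apply ⟨φ, hφ⟩, inner_add_right,
    adjoint_isFormalAdjoint hD.dense_domain_right_s4 u ⟨φ, hD.dom_eq.le hφ⟩,
    adjoint_isFormalAdjoint hD.dense' ⟨u, hW.le u.2⟩ ⟨φ, hφ⟩]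
  ring

end IsDualPairT12

section GraphSpace

variable {T0 T0t : H →ₗ.[ℂ] H} (hW : T0t†.domain = T0†.domain)

def bformLeft (v : T0t†.domain) : T0t†.domain →ₗ[ℂ] ℂ :=
  (innerₛₗ ℂ (v : H)) ∘ₗ T0t†.toFun - (innerₛₗ ℂ (T0† ⟨v, hW.le v.2⟩)) ∘ₗ T0t†.domain.subtype

theorem bformLeft_apply (u v : T0t†.domain) : bformLeft hW v u = bform T0 T0t hW u v := rfl

theorem bform_add_left (u u' v : T0t†.domain) :
    bform T0 T0t hW (u + u') v = bform T0 T0t hW u v + bform T0 T0t hW u' v :=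
  map_add (bformLeft hW v) u u'

theorem bform_sub_left (u u' v : T0t†.domain) :
    bform T0 T0t hW (u - u') v = bform T0 T0t hW u v - bform T0 T0t hW u' v :=
  map_sub (bformLeft hW v) u u'

theorem norm_bformLeft_le (u v : T0t†.domain) :
    ‖bformLeft hW v u‖ ≤ (‖(v : H)‖ + ‖T0† ⟨v, hW.le v.2⟩‖) * gnorm T0t u := by
  have hu : ‖(u : H)‖ ≤ gnorm T0t u := le_add_of_nonneg_right (norm_nonneg _)
  have hT1u : ‖T0t† u‖ ≤ gnorm T0t u := le_add_of_nonneg_left (norm_nonneg _)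
  calc ‖bformLeft hW v u‖ ≤ ‖(v : H)‖ * ‖T0t† u‖ + ‖T0† ⟨v, hW.le v.2⟩‖ * ‖(u : H)‖ :=
        (norm_sub_le _ _).trans (add_le_add (norm_inner_le_norm _ _) (norm_inner_le_norm _ _))
    _ ≤ _ := by rw [add_mul]; gcongr

def gipLeft (v : T0t†.domain) : T0t†.domain →ₗ[ℂ] ℂ :=
  (innerₛₗ ℂ (v : H)) ∘ₗ T0t†.domain.subtype + (innerₛₗ ℂ (T0t† v)) ∘ₗ T0t†.toFun

theorem norm_gipLeft_le (u v : T0t†.domain) :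
    ‖gipLeft v u‖ ≤ gnorm T0t v * gnorm T0t u := by
  have hu : ‖(u : H)‖ ≤ gnorm T0t u := le_add_of_nonneg_right (norm_nonneg _)
  have hT1u : ‖T0t† u‖ ≤ gnorm T0t u := le_add_of_nonneg_left (norm_nonneg _)
  calc ‖gipLeft v u‖ ≤ ‖(v : H)‖ * ‖(u : H)‖ + ‖T0t† v‖ * ‖T0t† u‖ :=
        (norm_add_le _ _).trans (add_le_add (norm_inner_le_norm _ _) (norm_inner_le_norm _ _))
    _ ≤ _ := by rw [gnorm, add_mul]; gcongr

theorem eq_zero_of_gip_self_eq_zero {u : T0t†.domain} (h : gip T0t u u = 0) : u = 0 := by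
  have hre : RCLike.re ⟪(u : H), u⟫_ℂ + RCLike.re ⟪T0t† u, T0t† u⟫_ℂ = 0 := by
    simpa [gip, pInner] using congrArg RCLike.re h
  have hu : RCLike.re ⟪(u : H), u⟫_ℂ ≤ 0 := by
    linarith [inner_self_nonneg (𝕜 := ℂ) (x := T0t† u)]
  exact Subtype.ext (re_inner_self_nonpos.mp hu)

end GraphSpace

namespace IsDualPairT12

variable {T0 T0t : H →ₗ.[ℂ] H} {lam : ℝ} (hD : IsDualPairT12 T0 T0t lam)
  (hW : T0t†.domain = T0†.domain)
include hD

theorem bform_swap (u v : T0t†.domain) :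
    bform T0 T0t hW v u = starRingEnd ℂ (bform T0 T0t hW u v) := by
  have hsymm := hD.inner_sumCLM_left u v
  rw [← hD.adjoint_add_adjoint_eq_sumCLM hW u, ← hD.adjoint_add_adjoint_eq_sumCLM hW v,
    inner_add_left, inner_add_right] at hsymm
  simp only [bform, pInner, _root_.map_sub, inner_conj_symm]
  linear_combination -hsymm

theorem bform_eq_zero_of_mem_W0 {u : T0t†.domain} (hu : (u : H) ∈ T0.closure.domain)
    (v : T0t†.domain) : bform T0 T0t hW u v = 0 := by
  have hT1u : T0t† u = T0.closure ⟨u, hu⟩ := (hD.closure_le.2 rfl).symm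
  have hadj := ((adjoint_isFormalAdjoint hD.dense').symm.closure hD.isClosable)
    ⟨u, hu⟩ ⟨v, hW.le v.2⟩
  rw [bform, pInner, pInner, hT1u, ← inner_conj_symm, hadj, inner_conj_symm, sub_self]

theorem bform_eq_zero_of_right_mem_W0 {v : T0t†.domain} (hv : (v : H) ∈ T0.closure.domain)
    (u : T0t†.domain) : bform T0 T0t hW u v = 0 := by
  rw [← starRingEnd_self_apply (bform T0 T0t hW u v), ← hD.bform_swap,
    hD.bform_eq_zero_of_mem_W0 hW hv, _root_.map_zero]

/-- Testing graph orthogonality on `φ ∈ dom T₀ ⊆ W₀` gives `⟪T₁u, T₀φ⟫ = ⟪-u, φ⟫`. -/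
theorem exists_adjoint_adjoint_eq_neg {u : T0t†.domain} (hu : u ∈ W0perp T0 T0t) :
    ∃ h : T0t† u ∈ T0†.domain, T0† ⟨T0t† u, h⟩ = -u := by
  have key : ∀ φ : T0.domain, ⟪-(u : H), φ⟫_ℂ = ⟪T0t† u, T0 φ⟫_ℂ := by
    intro φ
    have hT1φ : T0t† ⟨φ, hD.le_adjoint_right_s4.1 φ.2⟩ = T0 φ := (hD.le_adjoint_right_s4.2 rfl).symm
    have h := hu ⟨φ, hD.le_adjoint_right_s4.1 φ.2⟩ (T0.le_closure.1 φ.2)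
    have h' := congrArg (starRingEnd ℂ) h
    simp only [gip, pInner, hT1φ, _root_.map_add, inner_conj_symm, _root_.map_zero] at h'
    rw [inner_neg_left]
    linear_combination -h'
  exact ⟨mem_adjoint_domain_of_exists _ ⟨_, key⟩, adjoint_apply_eq hD.dense' _ key⟩

theorem eq_zero_of_mem_W0perp_of_bform_eq_zero {u : T0t†.domain} (hu : u ∈ W0perp T0 T0t)
    (h : ∀ v, bform T0 T0t hW u v = 0) : u = 0 := by
  obtain ⟨hT1u, hT1T1u⟩ := hD.exists_adjoint_adjoint_eq_neg hu
  refine eq_zero_of_gip_self_eq_zero ?_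
  have hb := h ⟨T0t† u, hW.ge hT1u⟩
  rw [bform, pInner, pInner] at hb
  simp only [hT1T1u, inner_neg_left] at hb
  rw [gip, pInner, pInner]
  linear_combination hb

theorem exists_mem_W0_sub_mem_W0perp (b : T0t†.domain) :
    ∃ b0 : T0t†.domain, (b0 : H) ∈ T0.closure.domain ∧ b - b0 ∈ W0perp T0 T0t := by
  obtain ⟨x, hx⟩ := hD.isClosable.closure_isClosed.exists_inner_add_inner_eq_zero
    ((b : H), T0t† b)
  refine ⟨⟨x, hD.closure_le.1 x.2⟩, x.2, fun v hv => ?_⟩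
  have hT1 : ∀ y : T0.closure.domain,
      T0t† ⟨y, hD.closure_le.1 y.2⟩ = T0.closure y := fun y => (hD.closure_le.2 rfl).symm
  have h := hx ⟨v, hv⟩
  rw [← hT1 ⟨v, hv⟩, ← hT1 x] at h
  rw [gip, pInner, pInner, LinearPMap.map_sub, Submodule.coe_sub]
  exact h

end IsDualPairT12

namespace MOp

variable {T0t : H →ₗ.[ℂ] H} (M : MOp T0t)

def mLeft (v : T0t†.domain) : T0t†.domain →ₗ[ℂ] ℂ where
  toFun u := M.m u v
  map_add' u u' := M.add_left u u' v
  map_smul' c u := M.smul_left c u v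

theorem m_sub_left (u u' v : T0t†.domain) : M.m (u - u') v = M.m u v - M.m u' v :=
  map_sub (M.mLeft v) u u'

theorem exists_norm_mLeft_le (v : T0t†.domain) :
    ∃ K, ∀ u, ‖M.mLeft v u‖ ≤ K * gnorm T0t u := by
  obtain ⟨C, hC⟩ := M.bounded
  exact ⟨C * gnorm T0t v, fun u => (hC u v).trans_eq (by ring)⟩

/-- Polarization for a form with non-negative real part: testing (M1) on `v - t ᾱ u`,
`α = m u v`, `t ∈ ℝ`, gives `t |α|² ≤ Re m v v` for every `t`. -/
theorem m_eq_zero_of_forall_m_eq_zero (hpos : ∀ u, 0 ≤ (M.m u u).re) {u : T0t†.domain}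
    (h : ∀ v, M.m v u = 0) (v : T0t†.domain) : M.m u v = 0 := by
  set α := M.m u v
  have key (t : ℝ) : t * Complex.normSq α ≤ (M.m v v).re := by
    have hexp : M.m (v + (-(t * starRingEnd ℂ α)) • u) (v + (-(t * starRingEnd ℂ α)) • u)
        = M.m v v - (t * Complex.normSq α : ℝ) := by
      rw [M.add_left, M.add_right, M.add_right, M.smul_left, M.smul_left, M.smul_right,
        M.smul_right, h v, h u, Complex.ofReal_mul, Complex.normSq_eq_conj_mul_self]
      ring
    have := hpos (v + (-(t * starRingEnd ℂ α)) • u)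
    rw [hexp, Complex.sub_re, Complex.ofReal_re] at this
    linarith
  by_contra hα
  have hpos' : 0 < Complex.normSq α := Complex.normSq_pos.mpr hα
  have := key (((M.m v v).re + 1) / Complex.normSq α)
  rw [div_mul_cancel₀ _ hpos'.ne'] at this
  linarith

end MOp

theorem IsDualPairT12.m_eq_zero_of_mem_W0 {T0 T0t : H →ₗ.[ℂ] H} {lam : ℝ}
    (hD : IsDualPairT12 T0 T0t lam) (hW : T0t†.domain = T0†.domain) {M : MOp T0t}
    (hM : MBC T0 T0t hW M.m) {u : T0t†.domain} (hu : (u : H) ∈ T0.closure.domain)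
    (v : T0t†.domain) : M.m u v = 0 := by
  refine M.m_eq_zero_of_forall_m_eq_zero hM.1 (fun w => ?_) v
  obtain ⟨a, b, ha, hb, rfl⟩ := hM.2 w
  have hbu := hb u
  rw [hD.bform_eq_zero_of_right_mem_W0 hW hu, zero_add] at hbu
  rw [M.add_left, ← ha u, hD.bform_eq_zero_of_right_mem_W0 hW hu, hbu, add_zero]

section W2

variable {T0 T0t : H →ₗ.[ℂ] H} (hW : T0t†.domain = T0†.domain) (M : MOp T0t)

theorem GClosed.inter {X Y : Set T0t†.domain} (hX : GClosed T0t X) (hY : GClosed T0t Y) :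
    GClosed T0t (X ∩ Y) :=
  fun f hf l hl => ⟨hX f (fun n => (hf n).1) l hl, hY f (fun n => (hf n).2) l hl⟩

theorem gclosed_iInf_ker {ι : Type*} (F : ι → T0t†.domain →ₗ[ℂ] ℂ)
    (hF : ∀ i, ∃ K, ∀ u, ‖F i u‖ ≤ K * gnorm T0t u) :
    GClosed T0t ↑(⨅ i, LinearMap.ker (F i)) := by
  intro f hf l hl
  simp only [SetLike.mem_coe, Submodule.mem_iInf, LinearMap.mem_ker] at hf ⊢
  intro i
  obtain ⟨K, hK⟩ := hF i
  have hle (n : ℕ) : ‖F i l‖ ≤ K * gdist T0t (f n) l := by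
    simpa [gdist, hf n i] using hK (f n - l)
  have h0 : ‖F i l‖ ≤ K * 0 := ge_of_tendsto' (hl.const_mul K) hle
  exact norm_le_zero_iff.mp (by simpa using h0)

def kerDaddMSubmodule : Submodule ℂ T0t†.domain :=
  ⨅ v, LinearMap.ker (bformLeft hW v + M.mLeft v)

theorem coe_kerDaddMSubmodule : (kerDaddMSubmodule hW M : Set T0t†.domain) =
    kerDaddM T0 T0t hW M.m := by
  ext u
  simp [kerDaddMSubmodule, kerDaddM, bformLeft_apply, MOp.mLeft]

def W0perpSubmodule (T0 T0t : H →ₗ.[ℂ] H) : Submodule ℂ T0t†.domain :=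
  ⨅ v : {v : T0t†.domain // (v : H) ∈ T0.closure.domain}, LinearMap.ker (gipLeft v.1)

theorem coe_W0perpSubmodule : (W0perpSubmodule T0 T0t : Set T0t†.domain) = W0perp T0 T0t := by
  ext u
  simp [W0perpSubmodule, W0perp, gipLeft, gip, pInner]

theorem coe_kerDaddMSubmodule_inf_W0perpSubmodule :
    ((kerDaddMSubmodule hW M ⊓ W0perpSubmodule T0 T0t : Submodule ℂ T0t†.domain) :
      Set T0t†.domain) = kerDaddM T0 T0t hW M.m ∩ W0perp T0 T0t := by
  rw [Submodule.coe_inf, coe_kerDaddMSubmodule, coe_W0perpSubmodule]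

theorem gclosed_kerDaddM_inter_W0perp :
    GClosed T0t (kerDaddM T0 T0t hW M.m ∩ W0perp T0 T0t) := by
  rw [← coe_kerDaddMSubmodule, ← coe_W0perpSubmodule]
  refine (gclosed_iInf_ker _ fun v => ?_).inter (gclosed_iInf_ker _ fun v => ?_)
  · obtain ⟨K, hK⟩ := M.exists_norm_mLeft_le v
    refine ⟨‖(v : H)‖ + ‖T0† ⟨v, hW.le v.2⟩‖ + K, fun u => ?_⟩
    rw [add_mul]
    exact (norm_add_le _ _).trans (add_le_add (norm_bformLeft_le hW u v) (hK u))
  · exact ⟨gnorm T0t v.1, fun u => norm_gipLeft_le u v.1⟩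

theorem kerDaddM_subset_Wminus (hM1 : ∀ u, 0 ≤ (M.m u u).re) :
    kerDaddM T0 T0t hW M.m ⊆ Wminus T0 T0t hW := by
  intro u hu
  have h : (bform T0 T0t hW u u).re = -(M.m u u).re := by
    rw [eq_neg_of_add_eq_zero_left (hu u), Complex.neg_re]
  change (bform T0 T0t hW u u).re ≤ 0
  linarith [hM1 u]

end W2

namespace IsDualPairT12

variable {T0 T0t : H →ₗ.[ℂ] H} {lam : ℝ} (hD : IsDualPairT12 T0 T0t lam)
  (hW : T0t†.domain = T0†.domain) {M : MOp T0t}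
include hD

theorem exists_kerDsubM_add_kerDaddM_inter_W0perp (hM : MBC T0 T0t hW M.m)
    (w : T0t†.domain) : ∃ a ∈ kerDsubM T0 T0t hW M.m,
      ∃ b ∈ kerDaddM T0 T0t hW M.m ∩ W0perp T0 T0t, w = a + b := by
  obtain ⟨a, b, ha, hb, rfl⟩ := hM.2 w
  obtain ⟨b0, hb0, hperp⟩ := hD.exists_mem_W0_sub_mem_W0perp b
  refine ⟨a + b0, fun v => ?_, b - b0, ⟨fun v => ?_, hperp⟩, by abel⟩
  · rw [bform_add_left, M.add_left, ha v, hD.bform_eq_zero_of_mem_W0 hW hb0,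
      hD.m_eq_zero_of_mem_W0 hW hM hb0]
  · rw [bform_sub_left, M.m_sub_left, hD.bform_eq_zero_of_mem_W0 hW hb0,
      hD.m_eq_zero_of_mem_W0 hW hM hb0, sub_zero, sub_zero, hb v]

theorem eq_zero_of_mem_kerDsubM_of_mem_kerDaddM_inter_W0perp {u : T0t†.domain}
    (hV : u ∈ kerDsubM T0 T0t hW M.m) (hW₂ : u ∈ kerDaddM T0 T0t hW M.m ∩ W0perp T0 T0t) :
    u = 0 :=
  hD.eq_zero_of_mem_W0perp_of_bform_eq_zero hW hW₂.2 fun v => by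
    linear_combination (hV v + hW₂.1 v) / 2

end IsDualPairT12

/-- Theorem 5.1(ii): if `M` satisfies the (M)-boundary conditions and
`V := ker (D − M)`, then `W₂ := ker (D + M) ∩ W₀^⊥` is a closed subspace of `W`
contained in `W⁻`, and `W = V ∔ W₂`. -/
theorem kerDaddM_inter_W0perp_closed_and_direct_sum
    (T0 T0t : H →ₗ.[ℂ] H) (lam mu : ℝ) (hF : IsFriedrichsPair T0 T0t lam mu)
    (hW : T0t.adjoint.domain = T0.adjoint.domain)
    (M : MOp T0t) (hM : MBC T0 T0t hW M.m) :
    ((0 : ↥T0t.adjoint.domain) ∈ kerDaddM T0 T0t hW M.m ∩ W0perp T0 T0t ∧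
     (∀ u v, u ∈ kerDaddM T0 T0t hW M.m ∩ W0perp T0 T0t →
        v ∈ kerDaddM T0 T0t hW M.m ∩ W0perp T0 T0t →
        u + v ∈ kerDaddM T0 T0t hW M.m ∩ W0perp T0 T0t) ∧
     (∀ (c : ℂ) u, u ∈ kerDaddM T0 T0t hW M.m ∩ W0perp T0 T0t →
        c • u ∈ kerDaddM T0 T0t hW M.m ∩ W0perp T0 T0t)) ∧
    GClosed T0t (kerDaddM T0 T0t hW M.m ∩ W0perp T0 T0t) ∧
    (kerDaddM T0 T0t hW M.m ∩ W0perp T0 T0t) ⊆ Wminus T0 T0t hW ∧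
    (∀ w : ↥T0t.adjoint.domain, ∃ a ∈ kerDsubM T0 T0t hW M.m,
      ∃ b ∈ kerDaddM T0 T0t hW M.m ∩ W0perp T0 T0t, w = a + b) ∧
    (∀ u, u ∈ kerDsubM T0 T0t hW M.m →
      u ∈ kerDaddM T0 T0t hW M.m ∩ W0perp T0 T0t → u = 0) := by
  have hD := hF.toIsDualPairT12
  refine ⟨?_, gclosed_kerDaddM_inter_W0perp hW M,
    Set.inter_subset_left.trans (kerDaddM_subset_Wminus hW M hM.1),
    hD.exists_kerDsubM_add_kerDaddM_inter_W0perp hW hM,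
    fun u => hD.eq_zero_of_mem_kerDsubM_of_mem_kerDaddM_inter_W0perp hW⟩
  rw [← coe_kerDaddMSubmodule_inf_W0perpSubmodule hW M]
  exact ⟨zero_mem _, fun u v => add_mem, fun c u => Submodule.smul_mem _ c⟩
end
end
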